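/- arXiv:2312.01667 — 2 statements merged into one kernel-verified Lean document; each statement's English description precedes it below -/
import Mathlib

section
/- Let σ_x = !![0, 1; 1, 0], σ_y = !![0, -I; I, 0], σ_z = !![1, 0; 0, -1] and τ_y = σ_y, τ_z = σ_z denote Pauli matrices in Matrix (Fin 2) (Fin 2) ℂ, and let 1 denote the 2×2 identity. For k = (k_x, k_y, k_z) ∈ ℝ³ and m ∈ ℝ, define the 4×4 complex matrix H = k_x • (1 ⊗ σ_x) + k_y • (τ_y ⊗ σ_y) + k_z • (1 ⊗ σ_z) + m • (τ_z ⊗ σ_z), where ⊗ denotes the Kronecker product of matrices. Set ρ = √(k_y² + k_z²). Then the spectrum of H is the set { s₁ · √(k_x² + (ρ + s₂|m|)²) : s₁, s₂ ∈ {1, -1} } ⊆ ℝ ⊆ ℂ; equivalently, every eigenvalue E of H satisfies E = ±√(k_x² + (ρ ± |m|)²), and each such value is an eigenvalue. -/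
open Complex Matrix Kronecker

/-!
Listing the basis `Fin 2 × Fin 2` lexicographically turns `H` into an explicit real
4 × 4 matrix, whose characteristic polynomial is `(E² - k_x² - ρ² - m²)² - 4 m² ρ²`.
This factors as `(E² - k_x² - (ρ + |m|)²) (E² - k_x² - (ρ - |m|)²)`, and each factor
vanishes exactly at `E = ±√(k_x² + (ρ ± |m|)²)`.
-/

theorem Matrix.det_fin_four {R : Type*} [CommRing R] (A : Matrix (Fin 4) (Fin 4) R) :
    A.det =
      A 0 0 * (A 1 1 * (A 2 2 * A 3 3 - A 2 3 * A 3 2) - A 1 2 * (A 2 1 * A 3 3 - A 2 3 * A 3 1)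
          + A 1 3 * (A 2 1 * A 3 2 - A 2 2 * A 3 1))
      - A 0 1 * (A 1 0 * (A 2 2 * A 3 3 - A 2 3 * A 3 2) - A 1 2 * (A 2 0 * A 3 3 - A 2 3 * A 3 0)
          + A 1 3 * (A 2 0 * A 3 2 - A 2 2 * A 3 0))
      + A 0 2 * (A 1 0 * (A 2 1 * A 3 3 - A 2 3 * A 3 1) - A 1 1 * (A 2 0 * A 3 3 - A 2 3 * A 3 0)
          + A 1 3 * (A 2 0 * A 3 1 - A 2 1 * A 3 0))
      - A 0 3 * (A 1 0 * (A 2 1 * A 3 2 - A 2 2 * A 3 1) - A 1 1 * (A 2 0 * A 3 2 - A 2 2 * A 3 0)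
          + A 1 2 * (A 2 0 * A 3 1 - A 2 1 * A 3 0)) := by
  rw [det_succ_row_zero]
  simp [Fin.sum_univ_succ, det_fin_three, Fin.succAbove]
  ring

noncomputable def fourBandHamiltonian (kx ky kz m : ℝ) :
    Matrix (Fin 2 × Fin 2) (Fin 2 × Fin 2) ℂ :=
  kx • ((1 : Matrix (Fin 2) (Fin 2) ℂ) ⊗ₖ !![0, 1; 1, 0])
    + ky • (!![0, -I; I, 0] ⊗ₖ !![0, -I; I, 0])
    + kz • ((1 : Matrix (Fin 2) (Fin 2) ℂ) ⊗ₖ !![1, 0; 0, -1])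
    + m • (!![1, 0; 0, -1] ⊗ₖ !![1, 0; 0, -1])

theorem reindex_fourBandHamiltonian (kx ky kz m : ℝ) :
    reindex finProdFinEquiv finProdFinEquiv (fourBandHamiltonian kx ky kz m) =
      (!![kz + m, kx, 0, -ky; kx, -(kz + m), ky, 0; 0, ky, kz - m, kx; -ky, 0, kx, m - kz] :
        Matrix (Fin 4) (Fin 4) ℂ) := by
  ext i j
  fin_cases i <;> fin_cases j <;>
    simp [fourBandHamiltonian, finProdFinEquiv, one_apply, Fin.divNat, Fin.modNat] <;> ring

theorem eval_charpoly_fourBandHamiltonian (kx ky kz m : ℝ) (z : ℂ) :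
    (fourBandHamiltonian kx ky kz m).charpoly.eval z =
      (z ^ 2 - kx ^ 2 - (ky ^ 2 + kz ^ 2) - m ^ 2) ^ 2 - 4 * m ^ 2 * (ky ^ 2 + kz ^ 2) := by
  rw [← charpoly_reindex finProdFinEquiv, reindex_fourBandHamiltonian, eval_charpoly]
  simp [det_fin_four]
  ring

theorem Complex.sq_eq_ofReal_iff {c : ℝ} (hc : 0 ≤ c) {z : ℂ} :
    z ^ 2 = c ↔ ∃ s ∈ ({1, -1} : Set ℝ), z = ((s * √c : ℝ) : ℂ) := by
  have hsq : (c : ℂ) = ((√c : ℝ) : ℂ) ^ 2 := by exact_mod_cast (Real.sq_sqrt hc).symm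
  simp [hsq, sq_eq_sq_iff_eq_or_eq_neg]

theorem spectrum_fourBandHamiltonian (kx ky kz m : ℝ) :
    spectrum ℂ (fourBandHamiltonian kx ky kz m) =
      {z : ℂ | ∃ s ∈ ({1, -1} : Set ℝ),
        z ^ 2 = ((kx ^ 2 + (√(ky ^ 2 + kz ^ 2) + s * |m|) ^ 2 : ℝ) : ℂ)} := by
  ext z
  have hρ : ((√(ky ^ 2 + kz ^ 2) : ℝ) : ℂ) ^ 2 = ky ^ 2 + kz ^ 2 := by
    exact_mod_cast Real.sq_sqrt (by positivity)
  have hm : ((|m| : ℝ) : ℂ) ^ 2 = m ^ 2 := by exact_mod_cast sq_abs m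
  have hfactor : (fourBandHamiltonian kx ky kz m).charpoly.eval z =
      (z ^ 2 - ((kx ^ 2 + (√(ky ^ 2 + kz ^ 2) + 1 * |m|) ^ 2 : ℝ) : ℂ)) *
        (z ^ 2 - ((kx ^ 2 + (√(ky ^ 2 + kz ^ 2) + -1 * |m|) ^ 2 : ℝ) : ℂ)) := by
    rw [eval_charpoly_fourBandHamiltonian, ← hρ, ← hm]
    push_cast
    ring
  simp [mem_spectrum_iff_isRoot_charpoly, hfactor, sub_eq_zero]

/-- The four-band nodal-semimetal Hamiltonian
`H = k_x 1⊗σ_x + k_y τ_y⊗σ_y + k_z 1⊗σ_z + m τ_z⊗σ_z` has spectrum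
`{ s₁ √(k_x² + (ρ + s₂|m|)²) : s₁, s₂ ∈ {1,-1} }`, where `ρ = √(k_y² + k_z²)`. -/
theorem four_band_spectrum
    (kx ky kz m : ℝ)
    (σx σy σz : Matrix (Fin 2) (Fin 2) ℂ)
    (hσx : σx = !![0, 1; 1, 0])
    (hσy : σy = !![0, -I; I, 0])
    (hσz : σz = !![1, 0; 0, -1])
    (H : Matrix (Fin 2 × Fin 2) (Fin 2 × Fin 2) ℂ)
    (hH : H = kx • ((1 : Matrix (Fin 2) (Fin 2) ℂ) ⊗ₖ σx) + ky • (σy ⊗ₖ σy)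
        + kz • ((1 : Matrix (Fin 2) (Fin 2) ℂ) ⊗ₖ σz) + m • (σz ⊗ₖ σz))
    (ρ : ℝ) (hρ : ρ = Real.sqrt (ky ^ 2 + kz ^ 2)) :
    spectrum ℂ H =
      {z : ℂ | ∃ s₁ ∈ ({1, -1} : Set ℝ), ∃ s₂ ∈ ({1, -1} : Set ℝ),
        z = ((s₁ * Real.sqrt (kx ^ 2 + (ρ + s₂ * |m|) ^ 2) : ℝ) : ℂ)} := by
  subst hσx hσy hσz hH hρ
  rw [← fourBandHamiltonian, spectrum_fourBandHamiltonian]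
  ext z
  constructor
  · rintro ⟨s₂, hs₂, hz⟩
    obtain ⟨s₁, hs₁, rfl⟩ := (Complex.sq_eq_ofReal_iff (by positivity)).1 hz
    exact ⟨s₁, hs₁, s₂, hs₂, rfl⟩
  · rintro ⟨s₁, hs₁, s₂, hs₂, rfl⟩
    exact ⟨s₂, hs₂, (Complex.sq_eq_ofReal_iff (by positivity)).2 ⟨s₁, hs₁, rfl⟩⟩
end

section
/- Let σ_x = !![0, 1; 1, 0], σ_y = !![0, -I; I, 0], σ_z = !![1, 0; 0, -1] and τ_y = σ_y, τ_z = σ_z denote Pauli matrices in Matrix (Fin 2) (Fin 2) ℂ, and let 1 denote the 2×2 identity. For k = (k_x, k_y, k_z) ∈ ℝ³ and m ∈ ℝ with m ≠ 0, define the 4×4 complex matrix H = k_x • (1 ⊗ σ_x) + k_y • (τ_y ⊗ σ_y) + k_z • (1 ⊗ σ_z) + m • (τ_z ⊗ σ_z), where ⊗ denotes the Kronecker product. Then 0 is an eigenvalue of H (equivalently, det H = 0) if and only if k_x = 0 and k_y² + k_z² = m². In particular, the zero set of the band gap is the circle {(0, k_y, k_z) : k_y² + k_z² = m²}, a one-dimensional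 nodal loop. -/
open Complex Matrix Kronecker

theorem fourBandHamiltonian_submatrix_finProdFinEquiv (kx ky kz m : ℝ) :
    (fourBandHamiltonian kx ky kz m).submatrix
        (finProdFinEquiv (m := 2) (n := 2)).symm (finProdFinEquiv (m := 2) (n := 2)).symm
      = !![(kz : ℂ) + m, kx, 0, -ky;
           kx, -(kz + m), ky, 0;
           0, ky, kz - m, kx;
           -ky, 0, kx, m - kz] := by
  ext i j
  fin_cases i <;> fin_cases j <;>
    simp [fourBandHamiltonian, finProdFinEquiv, one_apply, Fin.divNat, Fin.modNat] <;> ring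

theorem det_fourBand_block {R : Type*} [CommRing R] (kx ky kz m : R) :
    !![kz + m, kx, 0, -ky;
       kx, -(kz + m), ky, 0;
       0, ky, kz - m, kx;
       -ky, 0, kx, m - kz].det
      = (kx ^ 2 + ky ^ 2 + kz ^ 2 - m ^ 2) ^ 2 + (2 * kx * m) ^ 2 := by
  simp [det_succ_row_zero, Fin.sum_univ_succ, Fin.succAbove]
  ring

theorem det_fourBandHamiltonian (kx ky kz m : ℝ) :
    (fourBandHamiltonian kx ky kz m).det
      = (((kx ^ 2 + ky ^ 2 + kz ^ 2 - m ^ 2) ^ 2 + (2 * kx * m) ^ 2 : ℝ) : ℂ) := by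
  rw [← det_submatrix_equiv_self (finProdFinEquiv (m := 2) (n := 2)).symm,
    fourBandHamiltonian_submatrix_finProdFinEquiv, det_fourBand_block]
  norm_cast

theorem sq_add_sq_eq_zero_iff_nodal_loop (kx ky kz m : ℝ) :
    (kx ^ 2 + ky ^ 2 + kz ^ 2 - m ^ 2) ^ 2 + (2 * kx * m) ^ 2 = 0 ↔
      kx = 0 ∧ ky ^ 2 + kz ^ 2 = m ^ 2 := by
  rw [add_eq_zero_iff_of_nonneg (sq_nonneg _) (sq_nonneg _), sq_eq_zero_iff, sq_eq_zero_iff,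
    sub_eq_zero]
  constructor
  · rintro ⟨hsphere, hkxm⟩
    have hkx4 : kx ^ 4 = 0 :=
      le_antisymm (by nlinarith [sq_nonneg ky, sq_nonneg kz]) (by positivity)
    obtain rfl : kx = 0 := pow_eq_zero_iff (by norm_num) |>.mp hkx4
    simpa using hsphere
  · rintro ⟨rfl, hcircle⟩
    simpa using hcircle

theorem four_band_nodal_loop_general
    (kx ky kz m : ℝ)
    (σx σy σz : Matrix (Fin 2) (Fin 2) ℂ)
    (hσx : σx = !![0, 1; 1, 0])
    (hσy : σy = !![0, -I; I, 0])
    (hσz : σz = !![1, 0; 0, -1])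
    (H : Matrix (Fin 2 × Fin 2) (Fin 2 × Fin 2) ℂ)
    (hH : H = kx • ((1 : Matrix (Fin 2) (Fin 2) ℂ) ⊗ₖ σx) + ky • (σy ⊗ₖ σy)
        + kz • ((1 : Matrix (Fin 2) (Fin 2) ℂ) ⊗ₖ σz) + m • (σz ⊗ₖ σz)) :
    ((0 : ℂ) ∈ spectrum ℂ H ↔ (kx = 0 ∧ ky ^ 2 + kz ^ 2 = m ^ 2)) ∧
      (H.det = 0 ↔ (kx = 0 ∧ ky ^ 2 + kz ^ 2 = m ^ 2)) := by
  have hH_eq : H = fourBandHamiltonian kx ky kz m := by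
    rw [hH, hσx, hσy, hσz, fourBandHamiltonian]
  have hdet : H.det = 0 ↔ kx = 0 ∧ ky ^ 2 + kz ^ 2 = m ^ 2 := by
    rw [hH_eq, det_fourBandHamiltonian, ofReal_eq_zero, sq_add_sq_eq_zero_iff_nodal_loop]
  refine ⟨?_, hdet⟩
  rw [spectrum.zero_mem_iff, isUnit_iff_isUnit_det, isUnit_iff_ne_zero, not_ne_iff, hdet]

/-- For the four-band nodal-semimetal Hamiltonian
`H = k_x 1⊗σ_x + k_y τ_y⊗σ_y + k_z 1⊗σ_z + m τ_z⊗σ_z` with `m ≠ 0`, zero is an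
eigenvalue of `H` (equivalently `det H = 0`) if and only if `k_x = 0` and
`k_y² + k_z² = m²`: the band crossings form a nodal loop. -/
theorem four_band_nodal_loop
    (kx ky kz m : ℝ) (hm : m ≠ 0)
    (σx σy σz : Matrix (Fin 2) (Fin 2) ℂ)
    (hσx : σx = !![0, 1; 1, 0])
    (hσy : σy = !![0, -I; I, 0])
    (hσz : σz = !![1, 0; 0, -1])
    (H : Matrix (Fin 2 × Fin 2) (Fin 2 × Fin 2) ℂ)
    (hH : H = kx • ((1 : Matrix (Fin 2) (Fin 2) ℂ) ⊗ₖ σx) + ky • (σy ⊗ₖ σy)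
        + kz • ((1 : Matrix (Fin 2) (Fin 2) ℂ) ⊗ₖ σz) + m • (σz ⊗ₖ σz)) :
    ((0 : ℂ) ∈ spectrum ℂ H ↔ (kx = 0 ∧ ky ^ 2 + kz ^ 2 = m ^ 2)) ∧
      (H.det = 0 ↔ (kx = 0 ∧ ky ^ 2 + kz ^ 2 = m ^ 2)) :=
  four_band_nodal_loop_general kx ky kz m σx σy σz hσx hσy hσz H hH
end
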